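/- Let 0 < β < 1 and k ≥ 2 an integer, and set γ = k / log₂(2^k − 1) (so γ > 1). Define p = (1 − β·(γ − 1)) / (2 − β·γ) and ϑ = 1/(2 − β). If β·γ < 2, then p < ϑ, i.e., the pruned elimination-tree exponent is strictly smaller than Thurley's exponent. -/
import Mathlib


open Real

/-- Let `0 < β < 1`, `k ≥ 2`, `γ = k / log₂(2^k - 1)`,
`p = (1 - β(γ-1))/(2 - βγ)` (the pruned elimination-tree exponent) and
`ϑ = 1/(2-β)` (Thurley's exponent).  If `βγ < 2` then `p < ϑ`. -/
theorem pruned_exponent_lt_thurley (β : ℝ) (k : ℕ) (hβ0 : 0 < β) (hβ1 : β < 1)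
    (hk : 2 ≤ k) (γ p ϑ : ℝ)
    (hγ : γ = (k : ℝ) / Real.logb 2 ((2 : ℝ) ^ k - 1))
    (hp : p = (1 - β * (γ - 1)) / (2 - β * γ))
    (hϑ : ϑ = 1 / (2 - β))
    (hlt : β * γ < 2) :
    p < ϑ := by
  have h4 : (4 : ℝ) ≤ (2 : ℝ) ^ k := by
    calc (4 : ℝ) = 2 ^ 2 := by norm_num
    _ ≤ 2 ^ k := by exact pow_le_pow_right₀ (by norm_num) hk
  have hL0 : 0 < Real.logb 2 ((2 : ℝ) ^ k - 1) :=
    Real.logb_pos one_lt_two (by linarith)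
  have hLk : Real.logb 2 ((2 : ℝ) ^ k - 1) < (k : ℝ) := by
    have h1 : Real.logb 2 ((2 : ℝ) ^ k - 1) < Real.logb 2 ((2 : ℝ) ^ k) :=
      Real.logb_lt_logb one_lt_two (by linarith) (by linarith)
    have h2 : Real.logb 2 ((2 : ℝ) ^ k) = (k : ℝ) := by
      simp [Real.logb_pow, Real.logb_self_eq_one]
    linarith [h1, h2 ▸ h1]
  have hγ1 : 1 < γ := by
    rw [hγ]
    exact (one_lt_div hL0).mpr hLk
  rw [hp, hϑ]
  rw [div_lt_div_iff₀ (by linarith) (by linarith)]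
  nlinarith [mul_pos (mul_pos hβ0 (by linarith : (0:ℝ) < γ - 1)) (by linarith : (0:ℝ) < 1 - β)]
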